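/- arXiv:2506.00909 — 4 statements merged into one kernel-verified Lean document; each statement's English description precedes it below -/
import Mathlib

section
/- Let f_1 ≥ f_2 ≥ ... ≥ f_M ≥ 0 and Y_1, ..., Y_M ≥ 0 with ∑_{i=1}^M Y_i ≤ 1. Then ∑_{i=1}^M f_i · Y_i · ∏_{k=1}^{i-1}(1 - Y_k) ≥ (1 - (1 - 1/M)^M) · ∑_{i=1}^M f_i Y_i. -/
theorem stmt_0 (M : ℕ) (hM : 0 < M) (f Y : Fin M → ℝ)
    (hf_mono : ∀ i j : Fin M, i ≤ j → f j ≤ f i)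
    (hf_nonneg : ∀ i, 0 ≤ f i)
    (hY_nonneg : ∀ i, 0 ≤ Y i)
    (hY_sum : ∑ i, Y i ≤ 1) :
    ∑ i, f i * Y i * ∏ k ∈ Finset.Iio i, (1 - Y k)
      ≥ (1 - (1 - 1 / (M : ℝ)) ^ M) * ∑ i, f i * Y i := by
  classical
  set c : ℝ := 1 - (1 - 1 / (M : ℝ)) ^ M with hc
  have hM1 : (1 : ℝ) ≤ (M : ℝ) := by exact_mod_cast hM
  have hMpos : (0 : ℝ) < (M : ℝ) := by positivity
  have h1M : (0 : ℝ) ≤ 1 - 1 / (M : ℝ) := by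
    have : 1 / (M : ℝ) ≤ 1 := by
      rw [div_le_one hMpos]; exact hM1
    linarith
  have hc0 : 0 ≤ c := by
    have hMi : (0:ℝ) < 1 / (M : ℝ) := by positivity
    have : (1 - 1 / (M : ℝ)) ^ M ≤ 1 := pow_le_one₀ h1M (by linarith)
    simp only [hc]; linarith
  -- extensions to ℕ
  set Y' : ℕ → ℝ := fun n => if h : n < M then Y ⟨n, h⟩ else 0 with hY'
  set F : ℕ → ℝ := fun n => if h : n < M then f ⟨n, h⟩ else 0 with hF
  set Q : ℕ → ℝ := fun n => ∏ k ∈ Finset.range n, (1 - Y' k) with hQ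
  have hY'nonneg : ∀ n, 0 ≤ Y' n := by
    intro n; simp only [hY']
    split
    · exact hY_nonneg _
    · exact le_rfl
  have hY'sum : ∑ n ∈ Finset.range M, Y' n = ∑ i, Y i := by
    rw [Finset.sum_range fun n => Y' n]
    refine Finset.sum_congr rfl fun i _ => ?_
    simp [hY', i.isLt]
  have hY'le1 : ∀ n, Y' n ≤ 1 := by
    intro n
    by_cases h : n < M
    · calc Y' n ≤ ∑ m ∈ Finset.range M, Y' m :=
            Finset.single_le_sum (fun m _ => hY'nonneg m) (Finset.mem_range.2 h)
        _ ≤ 1 := by rw [hY'sum]; exact hY_sum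
    · simp [hY', h]
  -- key prefix positivity
  have key : ∀ m, m ≤ M → c * ∑ n ∈ Finset.range m, Y' n ≤ ∑ n ∈ Finset.range m, Y' n * Q n := by
    intro m hm
    set S : ℝ := ∑ n ∈ Finset.range m, Y' n with hS
    have hS0 : 0 ≤ S := Finset.sum_nonneg fun n _ => hY'nonneg n
    have hS1 : S ≤ 1 := by
      calc S ≤ ∑ n ∈ Finset.range M, Y' n :=
          Finset.sum_le_sum_of_subset_of_nonneg (Finset.range_subset_range.2 hm)
            (fun n _ _ => hY'nonneg n)
        _ ≤ 1 := by rw [hY'sum]; exact hY_sum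
    -- telescoping
    have htel : ∑ n ∈ Finset.range m, Y' n * Q n = 1 - Q m := by
      have h1 : ∀ n, Y' n * Q n = Q n - Q (n + 1) := by
        intro n
        simp only [hQ, Finset.prod_range_succ]
        ring
      simp_rw [h1]
      rw [Finset.sum_range_sub' Q]
      simp [hQ]
    rw [htel]
    -- AM-GM padded bound : Q m ≤ (1 - S/M)^M
    set z : ℕ → ℝ := fun n => if n < m then 1 - Y' n else 1 with hz
    have hznn : ∀ n, 0 ≤ z n := by
      intro n; simp only [hz]; split
      · linarith [hY'le1 n]
      · norm_num
    have hzprod : Q m = ∏ n ∈ Finset.range M, z n := by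
      rw [hQ]
      rw [← Finset.prod_subset (Finset.range_subset_range.2 hm)
        (fun n _ hn => by
          have h' : ¬ n < m := by simpa using hn
          simp [hz, h'])]
      refine Finset.prod_congr rfl fun n hn => ?_
      simp [hz, Finset.mem_range.1 hn]
    have hzsum : ∑ n ∈ Finset.range M, (1 / (M : ℝ)) * z n = 1 - S / M := by
      rw [← Finset.mul_sum]
      have hsplit : ∑ n ∈ Finset.range M, z n = (M : ℝ) - S := by
        rw [← Finset.sum_range_add_sum_Ico _ hm]
        have h1 : ∑ n ∈ Finset.range m, z n = (m : ℝ) - S := by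
          have : ∀ n ∈ Finset.range m, z n = 1 - Y' n := fun n hn => by
            simp [hz, Finset.mem_range.1 hn]
          rw [Finset.sum_congr rfl this, Finset.sum_sub_distrib]
          simp [hS]
        have h2 : ∑ n ∈ Finset.Ico m M, z n = (M : ℝ) - (m : ℝ) := by
          have : ∀ n ∈ Finset.Ico m M, z n = 1 := fun n hn => by
            simp [hz, not_lt.2 (Finset.mem_Ico.1 hn).1]
          rw [Finset.sum_congr rfl this, Finset.sum_const, Nat.card_Ico,
            nsmul_eq_mul, mul_one, Nat.cast_sub hm]
        rw [h1, h2]; ring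
      rw [hsplit]
      field_simp
    have hQle : Q m ≤ (1 - S / M) ^ M := by
      have hw : ∑ _n ∈ Finset.range M, (1 / (M : ℝ)) = 1 := by
        rw [Finset.sum_const, Finset.card_range, nsmul_eq_mul]
        field_simp
      have hgm := Real.geom_mean_le_arith_mean_weighted (Finset.range M)
        (fun _ => 1 / (M : ℝ)) z (fun _ _ => by positivity) hw (fun n _ => hznn n)
      rw [hzsum] at hgm
      rw [Real.finset_prod_rpow _ _ (fun n _ => hznn n)] at hgm
      have hP0 : 0 ≤ ∏ n ∈ Finset.range M, z n := Finset.prod_nonneg fun n _ => hznn n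
      have := pow_le_pow_left₀ (Real.rpow_nonneg hP0 _) hgm M
      rwa [← Real.rpow_natCast ((∏ n ∈ Finset.range M, z n) ^ (1 / (M : ℝ))) M,
        ← Real.rpow_mul hP0, one_div_mul_cancel (ne_of_gt hMpos), Real.rpow_one,
        ← hzprod] at this
    -- convexity : (1 - S/M)^M ≤ 1 - c * S
    have hconv : (1 - S / M) ^ M ≤ 1 - c * S := by
      have h := (convexOn_pow (𝕜 := ℝ) M).2 (Set.mem_Ici.2 (zero_le_one))
        (Set.mem_Ici.2 h1M) (by linarith : (0:ℝ) ≤ 1 - S) hS0 (by ring)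
      simp only [smul_eq_mul] at h
      have heq : (1 - S) * 1 + S * (1 - 1 / (M : ℝ)) = 1 - S / M := by
        field_simp; ring
      rw [heq] at h
      calc (1 - S / M) ^ M ≤ (1 - S) * 1 ^ M + S * (1 - 1 / (M : ℝ)) ^ M := h
        _ = 1 - c * S := by simp only [hc]; ring
    have h3 : Q m ≤ 1 - c * S := hQle.trans hconv
    linarith [h3]
  -- rewrite the goal via ℕ-indexed sums
  have hPQ : ∀ i : Fin M, ∏ k ∈ Finset.Iio i, (1 - Y k) = Q i.val := by
    intro i
    rw [hQ]
    simp only [← Nat.Iio_eq_range]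
    rw [← Fin.map_valEmbedding_Iio, Finset.prod_map]
    refine Finset.prod_congr rfl fun k _ => ?_
    simp [hY', k.isLt]
  have hLHS : ∑ i, f i * Y i * ∏ k ∈ Finset.Iio i, (1 - Y k)
      = ∑ n ∈ Finset.range M, F n * (Y' n * Q n) := by
    rw [Finset.sum_range fun n => F n * (Y' n * Q n)]
    refine Finset.sum_congr rfl fun i _ => ?_
    rw [hPQ i]
    simp [hF, hY', i.isLt, mul_assoc]
  have hRHS : ∑ i, f i * Y i = ∑ n ∈ Finset.range M, F n * Y' n := by
    rw [Finset.sum_range fun n => F n * Y' n]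
    refine Finset.sum_congr rfl fun i _ => ?_
    simp [hF, hY', i.isLt]
  rw [hLHS, hRHS, ge_iff_le]
  -- Abel summation
  set g : ℕ → ℝ := fun n => Y' n * Q n - c * Y' n with hg
  have hsplit : ∑ n ∈ Finset.range M, F n * (Y' n * Q n)
      - c * ∑ n ∈ Finset.range M, F n * Y' n = ∑ n ∈ Finset.range M, F n * g n := by
    rw [Finset.mul_sum, ← Finset.sum_sub_distrib]
    refine Finset.sum_congr rfl fun n _ => ?_
    simp only [hg]; ring
  rw [← sub_nonneg, hsplit]
  have habel := Finset.sum_range_by_parts F g M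
  simp only [smul_eq_mul] at habel
  rw [habel]
  have hGnonneg : ∀ n, n ≤ M → 0 ≤ ∑ i ∈ Finset.range n, g i := by
    intro n hn
    have := key n hn
    simp only [hg, Finset.sum_sub_distrib, ← Finset.mul_sum]
    linarith
  have hFnn : ∀ n, 0 ≤ F n := by
    intro n; simp only [hF]; split
    · exact hf_nonneg _
    · exact le_rfl
  have h1 : 0 ≤ F (M - 1) * ∑ i ∈ Finset.range M, g i :=
    mul_nonneg (hFnn _) (hGnonneg M le_rfl)
  have h2 : ∑ i ∈ Finset.range (M - 1), (F (i + 1) - F i) * ∑ j ∈ Finset.range (i + 1), g j ≤ 0 := by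
    refine Finset.sum_nonpos fun i hi => ?_
    have hiM : i + 1 < M := by
      have := Finset.mem_range.1 hi
      omega
    have hmono : F (i + 1) ≤ F i := by
      have h' : i < M := by omega
      simp only [hF, dif_pos hiM, dif_pos h']
      exact hf_mono ⟨i, h'⟩ ⟨i + 1, hiM⟩ (by simp [Fin.le_def])
    exact mul_nonpos_of_nonpos_of_nonneg (by linarith) (hGnonneg (i + 1) (by omega))
  linarith
end

section
/- Consider the single-resource dynamic programs: G_t(s) defined on states s ∈ {0,1}^N by G_{T+1} ≡ 0 and G_t(s) = (1-p_t)G_{t+1}(s) + p_t · max{w_t + G_{t+1}(s - 1_{[l_t,r_t]}), G_{t+1}(s)} if 1_{[l_t,r_t]} ≤ s, else G_t(s) = G_{t+1}(s); and F_t([a,b]) defined on intervals by F_{T+1} ≡ 0, F_t(∅) = 0, and F_t([a,b]) = (1-p_t)F_{t+1}([a,b]) + p_t · max{w_t + F_{t+1}([a,l_t-1]) + F_{t+1}([r_t+1,b]), F_{t+1}([a,b])} if [l_t,r_t] ⊆ [a,b], else F_t([a,b]) = F_{t+1}([a,b]). Then for every t ∈ {1,...,T+1} and every state s, G_t(s)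 = ∑_{[a,b] maximal sequence of s} F_t([a,b]). -/
open scoped Classical

/-- `[a,b]` is a maximal sequence of the binary vector `s` (indexed `1,…,N`, with
`s 0 = s (N+1) = false` by convention on valid vectors). -/
def IsMaxSeq (N : ℕ) (s : ℕ → Bool) (a b : ℕ) : Prop :=
  1 ≤ a ∧ a ≤ b ∧ b ≤ N ∧ (∀ i, a ≤ i → i ≤ b → s i = true) ∧
    s (a - 1) = false ∧ s (b + 1) = false

/-- Zero out the entries in the interval `[l,r]` of the state `s`. -/
def zeroOut (s : ℕ → Bool) (l r : ℕ) : ℕ → Bool :=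
  fun i => if l ≤ i ∧ i ≤ r then false else s i

lemma zeroOut_of_false {s : ℕ → Bool} {l r i : ℕ} (h : s i = false) :
    zeroOut s l r i = false := by
  unfold zeroOut; split <;> simp [h]

lemma zeroOut_of_out {s : ℕ → Bool} {l r i : ℕ} (h : ¬ (l ≤ i ∧ i ≤ r)) :
    zeroOut s l r i = s i := by
  unfold zeroOut; rw [if_neg h]

lemma zeroOut_of_in {s : ℕ → Bool} {l r i : ℕ} (h1 : l ≤ i) (h2 : i ≤ r) :
    zeroOut s l r i = false := by
  unfold zeroOut; rw [if_pos ⟨h1, h2⟩]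

/-- Two maximal sequences sharing a point coincide. -/
lemma maxseq_unique {N : ℕ} {s : ℕ → Bool} {a b a' b' i : ℕ}
    (h : IsMaxSeq N s a b) (h' : IsMaxSeq N s a' b')
    (hi1 : a ≤ i) (hi2 : i ≤ b) (hi3 : a' ≤ i) (hi4 : i ≤ b') :
    a = a' ∧ b = b' := by
  obtain ⟨ha1, hab, hbN, hall, hlft, hrgt⟩ := h
  obtain ⟨ha1', hab', hbN', hall', hlft', hrgt'⟩ := h'
  constructor
  · rcases Nat.lt_trichotomy a a' with h | h | h
    · have := hall (a' - 1) (by omega) (by omega)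
      rw [this] at hlft'; exact absurd hlft' (by simp)
    · exact h
    · have := hall' (a - 1) (by omega) (by omega)
      rw [this] at hlft; exact absurd hlft (by simp)
  · rcases Nat.lt_trichotomy b b' with h | h | h
    · have := hall' (b + 1) (by omega) (by omega)
      rw [this] at hrgt; exact absurd hrgt (by simp)
    · exact h
    · have := hall (b' + 1) (by omega) (by omega)
      rw [this] at hrgt'; exact absurd hrgt' (by simp)

/-- Any all-ones interval of a valid state is contained in a maximal sequence. -/
lemma run_exists {N : ℕ} {s : ℕ → Bool}
    (hs : ∀ i, (i = 0 ∨ N + 1 ≤ i) → s i = false)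
    {l r : ℕ} (hl : 1 ≤ l) (hlr : l ≤ r) (hr : r ≤ N)
    (hones : ∀ i, l ≤ i → i ≤ r → s i = true) :
    ∃ a b, IsMaxSeq N s a b ∧ a ≤ l ∧ r ≤ b := by
  have hA : ((Finset.range (l + 1)).filter (fun j => s j = false)).Nonempty :=
    ⟨0, by simp [hs 0 (Or.inl rfl)]⟩
  set j0 := ((Finset.range (l + 1)).filter (fun j => s j = false)).max' hA with hj0
  have hj0mem := Finset.max'_mem _ hA
  rw [← hj0] at hj0mem
  simp only [Finset.mem_filter, Finset.mem_range] at hj0mem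
  have hj0l : j0 < l := by
    rcases Nat.lt_or_ge j0 l with h | h
    · exact h
    · exfalso
      have : j0 = l := by omega
      rw [this, hones l le_rfl hlr] at hj0mem
      simp at hj0mem
  have hleft : ∀ i, j0 + 1 ≤ i → i ≤ l → s i = true := by
    intro i h1 h2
    by_contra hcon
    have hmem : i ∈ (Finset.range (l + 1)).filter (fun j => s j = false) := by
      simp only [Finset.mem_filter, Finset.mem_range]
      exact ⟨by omega, by simpa using hcon⟩
    have := Finset.le_max' _ i hmem
    omega
  have hB : ((Finset.Icc r (N + 1)).filter (fun j => s j = false)).Nonempty :=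
    ⟨N + 1, by simp [hs (N + 1) (Or.inr le_rfl), Finset.mem_Icc]; omega⟩
  set j1 := ((Finset.Icc r (N + 1)).filter (fun j => s j = false)).min' hB with hj1
  have hj1mem := Finset.min'_mem _ hB
  rw [← hj1] at hj1mem
  simp only [Finset.mem_filter, Finset.mem_Icc] at hj1mem
  have hj1r : r < j1 := by
    rcases Nat.lt_or_ge r j1 with h | h
    · exact h
    · exfalso
      have : j1 = r := by omega
      rw [this, hones r hlr le_rfl] at hj1mem
      simp at hj1mem
  have hright : ∀ i, r ≤ i → i ≤ j1 - 1 → s i = true := by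
    intro i h1 h2
    by_contra hcon
    have hmem : i ∈ (Finset.Icc r (N + 1)).filter (fun j => s j = false) := by
      simp only [Finset.mem_filter, Finset.mem_Icc]
      exact ⟨⟨h1, by omega⟩, by simpa using hcon⟩
    have := Finset.min'_le _ i hmem
    omega
  refine ⟨j0 + 1, j1 - 1, ⟨by omega, by omega, by omega, ?_, ?_, ?_⟩, by omega, by omega⟩
  · intro i h1 h2
    rcases Nat.lt_or_ge i l with h | h
    · exact hleft i h1 (by omega)
    · rcases le_or_gt i r with h' | h'
      · exact hones i h h'
      · exact hright i (by omega) h2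
  · simpa using hj0mem.2
  · have : j1 - 1 + 1 = j1 := by omega
    rw [this]; exact hj1mem.2

/-- Characterization of the maximal sequences after zeroing out `[l,r]`,
where `[a,b]` is the maximal sequence of `s` containing `[l,r]`. -/
lemma maxseq_zeroOut_iff {N : ℕ} {s : ℕ → Bool}
    {l r a b : ℕ} (hl : 1 ≤ l) (hlr : l ≤ r) (hr : r ≤ N)
    (hab : IsMaxSeq N s a b) (hal : a ≤ l) (hrb : r ≤ b)
    (a' b' : ℕ) :
    IsMaxSeq N (zeroOut s l r) a' b' ↔
      (IsMaxSeq N s a' b' ∧ ¬(a' = a ∧ b' = b)) ∨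
      (a' = a ∧ b' = l - 1 ∧ a ≤ l - 1) ∨
      (a' = r + 1 ∧ b' = b ∧ r + 1 ≤ b) := by
  obtain ⟨ha1, habb, hbN, hall, hlft, hrgt⟩ := hab
  constructor
  · rintro ⟨h1, h2, h3, h4, h5, h6⟩
    have hnotin : ∀ i, a' ≤ i → i ≤ b' → ¬(l ≤ i ∧ i ≤ r) ∧ s i = true := by
      intro i hi1 hi2
      have := h4 i hi1 hi2
      by_cases hin : l ≤ i ∧ i ≤ r
      · rw [zeroOut_of_in hin.1 hin.2] at this; simp at this
      · rw [zeroOut_of_out hin] at this; exact ⟨hin, this⟩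
    have hsep : b' < l ∨ r < a' := by
      by_contra hcon
      push_neg at hcon
      obtain ⟨hc1, hc2⟩ := hcon
      have := (hnotin (max a' l) (le_max_left _ _) (by omega)).1
      omega
    rcases hsep with hsep | hsep
    · -- interval to the left of [l,r]
      have hint : ∀ i, a' ≤ i → i ≤ b' → s i = true := fun i h1 h2 => (hnotin i h1 h2).2
      have hlft' : s (a' - 1) = false := by
        rw [← h5]; exact (zeroOut_of_out (by omega)).symm
      by_cases hb' : b' + 1 = l
      · -- b' = l - 1, and a' = a
        have ha'a : a' = a := by
          rcases Nat.lt_trichotomy a a' with h | h | h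
          · exfalso
            have := hall (a' - 1) (by omega) (by omega)
            rw [this] at hlft'; simp at hlft'
          · exact h.symm
          · exfalso
            have := hint (a - 1) (by omega) (by omega)
            rw [this] at hlft; simp at hlft
        exact Or.inr (Or.inl ⟨ha'a, by omega, by omega⟩)
      · -- genuine maximal sequence of s
        have hrgt' : s (b' + 1) = false := by
          rw [← h6]; exact (zeroOut_of_out (by omega)).symm
        exact Or.inl ⟨⟨h1, h2, h3, hint, hlft', hrgt'⟩, by omega⟩
    · -- interval to the right of [l,r]
      have hint : ∀ i, a' ≤ i → i ≤ b' → s i = true := fun i h1 h2 => (hnotin i h1 h2).2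
      have hrgt' : s (b' + 1) = false := by
        rw [← h6]; exact (zeroOut_of_out (by omega)).symm
      by_cases ha' : a' = r + 1
      · have hb'b : b' = b := by
          rcases Nat.lt_trichotomy b b' with h | h | h
          · exfalso
            have := hint (b + 1) (by omega) (by omega)
            rw [this] at hrgt; simp at hrgt
          · exact h.symm
          · exfalso
            have := hall (b' + 1) (by omega) (by omega)
            rw [this] at hrgt'; simp at hrgt'
        exact Or.inr (Or.inr ⟨ha', hb'b, by omega⟩)
      · have hlft' : s (a' - 1) = false := by
          rw [← h5]; exact (zeroOut_of_out (by omega)).symm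
        exact Or.inl ⟨⟨h1, h2, h3, hint, hlft', hrgt'⟩, by omega⟩
  · rintro (⟨⟨ha1', habb', hbN', hall', hlft', hrgt'⟩, hne⟩ | ⟨h1, h2, h3⟩ | ⟨h1, h2, h3⟩)
    · -- a maximal sequence of s distinct from [a,b] is disjoint from it
      have hdisj : b' < a ∨ b < a' := by
        by_contra hcon
        push_neg at hcon
        have := maxseq_unique ⟨ha1, habb, hbN, hall, hlft, hrgt⟩
          ⟨ha1', habb', hbN', hall', hlft', hrgt'⟩
          (le_max_left a a') (by omega) (le_max_right a a') (by omega)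
        exact hne ⟨this.1.symm, this.2.symm⟩
      refine ⟨ha1', habb', hbN', ?_, zeroOut_of_false hlft', zeroOut_of_false hrgt'⟩
      intro i hi1 hi2
      rw [zeroOut_of_out (by omega)]
      exact hall' i hi1 hi2
    · subst h1 h2
      refine ⟨ha1, h3, by omega, ?_, zeroOut_of_false hlft, ?_⟩
      · intro i hi1 hi2
        rw [zeroOut_of_out (by omega)]
        exact hall i hi1 (by omega)
      · have : l - 1 + 1 = l := by omega
        rw [this]; exact zeroOut_of_in le_rfl hlr
    · subst h1 h2
      refine ⟨by omega, h3, hbN, ?_, ?_, zeroOut_of_false hrgt⟩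
      · intro i hi1 hi2
        rw [zeroOut_of_out (by omega)]
        exact hall i (by omega) hi2
      · have : r + 1 - 1 = r := by omega
        rw [this]; exact zeroOut_of_in hlr le_rfl

theorem stmt_13 (T N : ℕ) (hT : 1 ≤ T) (hN : 1 ≤ N)
    (p w : ℕ → ℝ) (l r : ℕ → ℕ)
    (hp : ∀ t, 1 ≤ t → t ≤ T → 0 ≤ p t ∧ p t ≤ 1)
    (hw : ∀ t, 1 ≤ t → t ≤ T → 0 ≤ w t)
    (hlr : ∀ t, 1 ≤ t → t ≤ T → 1 ≤ l t ∧ l t ≤ r t ∧ r t ≤ N)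
    (G : ℕ → (ℕ → Bool) → ℝ) (F : ℕ → ℕ → ℕ → ℝ)
    -- boundary conditions
    (hG_bd : ∀ s, G (T + 1) s = 0)
    (hF_bd : ∀ a b, F (T + 1) a b = 0)
    (hF_empty : ∀ t a b, b < a → F t a b = 0)
    -- recursion for G
    (hG_rec : ∀ t, 1 ≤ t → t ≤ T → ∀ s : ℕ → Bool,
      G t s =
        if ∀ i, l t ≤ i → i ≤ r t → s i = true then
          (1 - p t) * G (t + 1) s +
            p t * max (w t + G (t + 1) (zeroOut s (l t) (r t))) (G (t + 1) s)
        else G (t + 1) s)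
    -- recursion for F
    (hF_rec : ∀ t, 1 ≤ t → t ≤ T → ∀ a b, 1 ≤ a → a ≤ b → b ≤ N →
      F t a b =
        if a ≤ l t ∧ r t ≤ b then
          (1 - p t) * F (t + 1) a b +
            p t * max (w t + F (t + 1) a (l t - 1) + F (t + 1) (r t + 1) b)
              (F (t + 1) a b)
        else F (t + 1) a b) :
    ∀ t, 1 ≤ t → t ≤ T + 1 → ∀ s : ℕ → Bool,
      (∀ i, (i = 0 ∨ N + 1 ≤ i) → s i = false) →
      G t s = ∑ ab ∈ (Finset.Icc 1 N ×ˢ Finset.Icc 1 N).filter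
          (fun ab => IsMaxSeq N s ab.1 ab.2), F t ab.1 ab.2 := by
  have key : ∀ d t, 1 ≤ t → t + d = T + 1 → ∀ s : ℕ → Bool,
      (∀ i, (i = 0 ∨ N + 1 ≤ i) → s i = false) →
      G t s = ∑ ab ∈ (Finset.Icc 1 N ×ˢ Finset.Icc 1 N).filter
          (fun ab => IsMaxSeq N s ab.1 ab.2), F t ab.1 ab.2 := by
    intro d
    induction d with
    | zero =>
      intro t ht1 ht2 s hs
      have ht : t = T + 1 := by omega
      subst ht
      rw [hG_bd]
      symm
      apply Finset.sum_eq_zero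
      intro x _
      exact hF_bd x.1 x.2
    | succ d ih =>
      intro t ht1 ht2 s hs
      have htT : t ≤ T := by omega
      have ih' := ih (t + 1) (by omega) (by omega)
      obtain ⟨hl1, hlr', hrN⟩ := hlr t ht1 htT
      rw [hG_rec t ht1 htT s]
      by_cases hc : ∀ i, l t ≤ i → i ≤ r t → s i = true
      · rw [if_pos hc]
        obtain ⟨a, b, hab, hal, hrb⟩ := run_exists hs hl1 hlr' hrN hc
        set s' := zeroOut s (l t) (r t) with hs'def
        have hs' : ∀ i, (i = 0 ∨ N + 1 ≤ i) → s' i = false := fun i hi =>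
          zeroOut_of_false (hs i hi)
        set P := Finset.Icc 1 N ×ˢ Finset.Icc 1 N with hP
        set A := P.filter (fun ab => IsMaxSeq N s ab.1 ab.2) with hA
        set A' := P.filter (fun ab => IsMaxSeq N s' ab.1 ab.2) with hA'
        have hmemP : ∀ x : ℕ × ℕ, IsMaxSeq N s x.1 x.2 ∨ IsMaxSeq N s' x.1 x.2 →
            x ∈ P := by
          rintro x (⟨h1, h2, h3, -⟩ | ⟨h1, h2, h3, -⟩) <;>
          · rw [hP, Finset.mem_product, Finset.mem_Icc, Finset.mem_Icc]
            omega
        have hAmem : ∀ x : ℕ × ℕ, x ∈ A ↔ IsMaxSeq N s x.1 x.2 := by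
          intro x
          rw [hA, Finset.mem_filter]
          exact ⟨fun h => h.2, fun h => ⟨hmemP x (Or.inl h), h⟩⟩
        have hA'mem : ∀ x : ℕ × ℕ, x ∈ A' ↔ IsMaxSeq N s' x.1 x.2 := by
          intro x
          rw [hA', Finset.mem_filter]
          exact ⟨fun h => h.2, fun h => ⟨hmemP x (Or.inr h), h⟩⟩
        have habA : (a, b) ∈ A := (hAmem (a, b)).2 hab
        have hiff := maxseq_zeroOut_iff hl1 hlr' hrN hab hal hrb
        rw [← hs'def] at hiff
        obtain ⟨ha1, habb, hbN, hall, hlft, hrgt⟩ := hab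
        -- the erased set
        set E := A.erase (a, b) with hE
        have hEmem : ∀ x : ℕ × ℕ, x ∈ E ↔ IsMaxSeq N s x.1 x.2 ∧ x ≠ (a, b) := by
          intro x
          rw [hE, Finset.mem_erase, hAmem]
          tauto
        -- sum over A' of F (t+1)
        have hX0 : ¬ a ≤ l t - 1 → F (t + 1) a (l t - 1) = 0 := fun h =>
          hF_empty (t + 1) a (l t - 1) (by omega)
        have hY0 : ¬ r t + 1 ≤ b → F (t + 1) (r t + 1) b = 0 := fun h =>
          hF_empty (t + 1) (r t + 1) b (by omega)
        have hXne : (a, l t - 1) ∉ E := by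
          rw [hEmem]
          rintro ⟨⟨-, -, -, -, -, h6⟩, -⟩
          have hll : l t - 1 + 1 = l t := by omega
          rw [hll, hc (l t) le_rfl hlr'] at h6
          simp at h6
        have hYne : (r t + 1, b) ∉ E := by
          rw [hEmem]
          rintro ⟨⟨-, -, -, -, h5, -⟩, -⟩
          have hll : r t + 1 - 1 = r t := by omega
          rw [hll, hc (r t) hlr' le_rfl] at h5
          simp at h5
        have hXYne : (a, l t - 1) ≠ ((r t + 1 : ℕ), b) := by
          intro h
          have := congrArg Prod.fst h
          simp at this
          omega
        have hsplit : ∑ x ∈ A', F (t + 1) x.1 x.2 =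
            (∑ x ∈ E, F (t + 1) x.1 x.2) + F (t + 1) a (l t - 1) +
              F (t + 1) (r t + 1) b := by
          by_cases h1 : a ≤ l t - 1 <;> by_cases h2 : r t + 1 ≤ b
          · have hset : A' = insert (a, l t - 1) (insert (r t + 1, b) E) := by
              ext x
              simp only [hA'mem, Finset.mem_insert, hEmem, hiff, Prod.ext_iff, ne_eq]
              constructor
              · rintro (h | ⟨e1, e2, -⟩ | ⟨e1, e2, -⟩)
                · exact Or.inr (Or.inr h)
                · exact Or.inl ⟨e1, e2⟩
                · exact Or.inr (Or.inl ⟨e1, e2⟩)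
              · rintro (⟨e1, e2⟩ | ⟨e1, e2⟩ | h)
                · exact Or.inr (Or.inl ⟨e1, e2, h1⟩)
                · exact Or.inr (Or.inr ⟨e1, e2, h2⟩)
                · exact Or.inl h
            rw [hset, Finset.sum_insert (by
                rw [Finset.mem_insert]
                rintro (h | h)
                · exact hXYne h
                · exact hXne h),
              Finset.sum_insert hYne]
            ring
          · have hset : A' = insert (a, l t - 1) E := by
              ext x
              simp only [hA'mem, Finset.mem_insert, hEmem, hiff, Prod.ext_iff, ne_eq]
              constructor
              · rintro (h | ⟨e1, e2, -⟩ | ⟨-, -, hle⟩)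
                · exact Or.inr h
                · exact Or.inl ⟨e1, e2⟩
                · exact absurd hle h2
              · rintro (⟨e1, e2⟩ | h)
                · exact Or.inr (Or.inl ⟨e1, e2, h1⟩)
                · exact Or.inl h
            rw [hset, Finset.sum_insert hXne, hY0 h2]
            ring
          · have hset : A' = insert (r t + 1, b) E := by
              ext x
              simp only [hA'mem, Finset.mem_insert, hEmem, hiff, Prod.ext_iff, ne_eq]
              constructor
              · rintro (h | ⟨-, -, hle⟩ | ⟨e1, e2, -⟩)
                · exact Or.inr h
                · exact absurd hle h1
                · exact Or.inl ⟨e1, e2⟩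
              · rintro (⟨e1, e2⟩ | h)
                · exact Or.inr (Or.inr ⟨e1, e2, h2⟩)
                · exact Or.inl h
            rw [hset, Finset.sum_insert hYne, hX0 h1]
            ring
          · have hset : A' = E := by
              ext x
              simp only [hA'mem, Finset.mem_insert, hEmem, hiff, Prod.ext_iff, ne_eq]
              constructor
              · rintro (h | ⟨-, -, hle⟩ | ⟨-, -, hle⟩)
                · exact h
                · exact absurd hle h1
                · exact absurd hle h2
              · exact fun h => Or.inl h
            rw [hset, hX0 h1, hY0 h2]
            ring
        -- sum over A of F (t+1)
        have hAsum : ∑ x ∈ A, F (t + 1) x.1 x.2 =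
            F (t + 1) a b + ∑ x ∈ E, F (t + 1) x.1 x.2 := by
          have h := Finset.sum_insert (f := fun x : ℕ × ℕ => F (t + 1) x.1 x.2)
            (Finset.notMem_erase (a, b) A)
          rw [Finset.insert_erase habA] at h
          rw [hE]
          simpa using h
        -- sum over A of F t (the goal's RHS)
        have hAtsum : ∑ x ∈ A, F t x.1 x.2 =
            F t a b + ∑ x ∈ E, F (t + 1) x.1 x.2 := by
          have h := Finset.sum_insert (f := fun x : ℕ × ℕ => F t x.1 x.2)
            (Finset.notMem_erase (a, b) A)
          rw [Finset.insert_erase habA] at h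
          simp only at h
          rw [h]
          congr 1
          apply Finset.sum_congr rfl
          intro x hx
          rw [hEmem] at hx
          obtain ⟨hms, hne⟩ := hx
          obtain ⟨h1, h2, h3, -, -, -⟩ := id hms
          rw [hF_rec t ht1 htT x.1 x.2 h1 h2 h3, if_neg]
          rintro ⟨hxl, hxr⟩
          have := maxseq_unique ⟨ha1, habb, hbN, hall, hlft, hrgt⟩ hms
            hal (by omega) hxl (by omega)
          exact hne (Prod.ext_iff.2 ⟨this.1.symm, this.2.symm⟩)
        have hFab : F t a b =
            (1 - p t) * F (t + 1) a b +
              p t * max (w t + F (t + 1) a (l t - 1) + F (t + 1) (r t + 1) b)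
                (F (t + 1) a b) := by
          rw [hF_rec t ht1 htT a b ha1 habb hbN, if_pos ⟨hal, hrb⟩]
        have hGs1 : G (t + 1) s = ∑ x ∈ A, F (t + 1) x.1 x.2 := by
          rw [ih' s hs, hA, hP]
        have hGs2 : G (t + 1) s' = ∑ x ∈ A', F (t + 1) x.1 x.2 := by
          rw [ih' s' hs', hA', hP]
        rw [hGs1, hGs2, hAtsum, hsplit, hAsum, hFab]
        set SE := ∑ x ∈ E, F (t + 1) x.1 x.2
        set Fab := F (t + 1) a b
        set X := F (t + 1) a (l t - 1)
        set Y := F (t + 1) (r t + 1) b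
        have : w t + (SE + X + Y) = (w t + X + Y) + SE := by ring
        rw [this, show Fab + SE = Fab + SE from rfl, max_add_add_right]
        ring
      · rw [if_neg hc, ih' s hs]
        apply Finset.sum_congr rfl
        intro x hx
        rw [Finset.mem_filter] at hx
        obtain ⟨-, hms⟩ := hx
        obtain ⟨h1, h2, h3, h4, -, -⟩ := hms
        rw [hF_rec t ht1 htT x.1 x.2 h1 h2 h3, if_neg]
        rintro ⟨hxl, hxr⟩
        exact hc fun i hi1 hi2 => h4 i (by omega) (by omega)
  intro t ht1 ht2 s hs
  exact key (T + 1 - t) t ht1 (by omega) s hs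
end

section
/- Let X be a nonnegative random variable of the form X = max_{j ∈ P} w_j where P is a random subset of {1,...,M} including each j independently with probability r_j (max over empty set is 0), and w_j ≥ 0. Then E[X] ≥ (1 - 1/e) ∑_{j=1}^M w_j r_j, provided ∑_{j=1}^M r_j ≤ 1. -/
/-!
Only two properties of `X ↦ max_{j ∈ X} w j` matter: it is monotone and vanishes at `∅`.
Adding to a ground set `s` an index `a` of least weight raises the expectation by at least
`w a` times `r a * ∏ j ∈ s, (1 - r j)`, the probability that `a` is the only index drawn.
Summing these increments in order of decreasing weight (Abel summation), the claim reduces to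
`1 - ∏ (1 - r j) ≥ 1 - exp (-∑ r j) ≥ (1 - 1/e) ∑ r j` on every initial segment, which is where
`∑ r j ≤ 1` enters.
-/

open MeasureTheory Finset

theorem mul_le_one_sub_exp_neg {t : ℝ} (h0 : 0 ≤ t) (h1 : t ≤ 1) :
    (1 - Real.exp (-1)) * t ≤ 1 - Real.exp (-t) := by
  have h := convexOn_exp.2 (Set.mem_univ 0) (Set.mem_univ (-1)) (sub_nonneg.2 h1) h0
    (sub_add_cancel 1 t)
  simp only [smul_eq_mul, mul_zero, mul_neg, mul_one, zero_add, Real.exp_zero] at h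
  linarith

theorem prod_one_sub_le_exp_neg_sum {ι : Type*} (s : Finset ι) {r : ι → ℝ}
    (hr : ∀ j ∈ s, r j ≤ 1) : ∏ j ∈ s, (1 - r j) ≤ Real.exp (-∑ j ∈ s, r j) := by
  rw [← sum_neg_distrib, Real.exp_sum]
  refine prod_le_prod (fun j hj => sub_nonneg.2 (hr j hj)) fun j _ => ?_
  linarith [Real.add_one_le_exp (-r j)]

theorem mul_sum_le_one_sub_prod_one_sub {ι : Type*} (s : Finset ι) {r : ι → ℝ}
    (hr : ∀ j ∈ s, 0 ≤ r j ∧ r j ≤ 1) (hs : ∑ j ∈ s, r j ≤ 1) :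
    (1 - Real.exp (-1)) * ∑ j ∈ s, r j ≤ 1 - ∏ j ∈ s, (1 - r j) := by
  have := prod_one_sub_le_exp_neg_sum s fun j hj => (hr j hj).2
  have := mul_le_one_sub_exp_neg (sum_nonneg fun j hj => (hr j hj).1) hs
  linarith

section Subsets

variable {ι : Type*} [DecidableEq ι]

/-- Probability that the random subset of `s` containing each `j` independently with probability
`r j` equals `X ⊆ s`. -/
def subsetProb (r : ι → ℝ) (s X : Finset ι) : ℝ := (∏ j ∈ X, r j) * ∏ j ∈ s \ X, (1 - r j)

def subsetExpect (r : ι → ℝ) (s : Finset ι) (g : Finset ι → ℝ) : ℝ :=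
  ∑ X ∈ s.powerset, subsetProb r s X * g X

theorem sum_subsetProb (r : ι → ℝ) (s : Finset ι) : ∑ X ∈ s.powerset, subsetProb r s X = 1 := by
  simp [subsetProb, ← prod_add]

theorem subsetProb_nonneg {r : ι → ℝ} (hr : ∀ j, 0 ≤ r j ∧ r j ≤ 1) (s X : Finset ι) :
    0 ≤ subsetProb r s X :=
  mul_nonneg (prod_nonneg fun j _ => (hr j).1) (prod_nonneg fun j _ => sub_nonneg.2 (hr j).2)

theorem subsetExpect_insert (r : ι → ℝ) (g : Finset ι → ℝ) {a : ι} {s : Finset ι} (ha : a ∉ s) :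
    subsetExpect r (insert a s) g = ∑ X ∈ s.powerset,
      subsetProb r s X * ((1 - r a) * g X + r a * g (insert a X)) := by
  rw [subsetExpect, sum_powerset_insert ha, ← sum_add_distrib]
  refine sum_congr rfl fun X hX => ?_
  have haX : a ∉ X := fun h => ha (mem_powerset.1 hX h)
  rw [subsetProb, subsetProb, subsetProb, insert_sdiff_of_notMem _ haX, insert_sdiff_insert,
    sdiff_insert_of_notMem ha, prod_insert haX, prod_insert (fun h => ha (mem_sdiff.1 h).1)]
  ring

theorem subsetExpect_add_le_subsetExpect_insert {r : ι → ℝ} (hr : ∀ j, 0 ≤ r j ∧ r j ≤ 1)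
    {g : Finset ι → ℝ} (hg : Monotone g) (hg0 : g ∅ = 0) {a : ι} {s : Finset ι} (ha : a ∉ s) :
    subsetExpect r s g + r a * (∏ j ∈ s, (1 - r j)) * g {a} ≤ subsetExpect r (insert a s) g := by
  have hgain : ∀ X ∈ s.powerset, 0 ≤ subsetProb r s X * (r a * (g (insert a X) - g X)) :=
    fun X _ => mul_nonneg (subsetProb_nonneg hr s X)
      (mul_nonneg (hr a).1 (sub_nonneg.2 (hg (subset_insert a X))))
  have hsplit : subsetExpect r (insert a s) g = subsetExpect r s g +
      ∑ X ∈ s.powerset, subsetProb r s X * (r a * (g (insert a X) - g X)) := by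
    rw [subsetExpect_insert r g ha, subsetExpect, ← sum_add_distrib]
    exact sum_congr rfl fun X _ => by ring
  have hempty := single_le_sum hgain (empty_mem_powerset s)
  have hprob : subsetProb r s ∅ = ∏ j ∈ s, (1 - r j) := by simp [subsetProb]
  rw [hprob, insert_empty, hg0, sub_zero] at hempty
  linarith

theorem mul_sum_le_subsetExpect {r : ι → ℝ} (hr : ∀ j, 0 ≤ r j ∧ r j ≤ 1)
    {g : Finset ι → ℝ} (hg : Monotone g) (hg0 : g ∅ = 0) (s : Finset ι)
    (hs : ∑ j ∈ s, r j ≤ 1) :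
    (1 - Real.exp (-1)) * ∑ j ∈ s, g {j} * r j ≤ subsetExpect r s g := by
  set c := 1 - Real.exp (-1)
  -- Abel summation in inductive form: `t` is a lower bound for the values `g {j}` still to come.
  suffices key : ∀ t, (∀ j ∈ s, t ≤ g {j}) →
      c * ∑ j ∈ s, g {j} * r j + t * (1 - ∏ j ∈ s, (1 - r j) - c * ∑ j ∈ s, r j) ≤
        subsetExpect r s g by
    have hslack := mul_sum_le_one_sub_prod_one_sub s (fun j _ => hr j) hs
    have := key 0 fun j _ => hg0 ▸ hg (empty_subset _)
    linarith
  induction s using induction_on_min_value (fun j => g {j}) with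
  | empty => simp [subsetExpect, subsetProb, hg0]
  | insert a s ha hmin ih =>
    intro t ht
    rw [sum_insert ha] at hs
    have hslack := mul_sum_le_one_sub_prod_one_sub (insert a s) (fun j _ => hr j)
      (by rwa [sum_insert ha])
    have hih := ih (by linarith [(hr a).1]) (g {a}) hmin
    have hstep := subsetExpect_add_le_subsetExpect_insert hr hg hg0 ha
    have hta : (g {a} - t) * (1 - ∏ j ∈ insert a s, (1 - r j) - c * ∑ j ∈ insert a s, r j) ≥ 0 :=
      mul_nonneg (sub_nonneg.2 (ht a (mem_insert_self a s))) (by linarith)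
    simp only [sum_insert ha, prod_insert ha] at hta ⊢
    linarith

end Subsets

section FiniteSup

variable {ι : Type*} [Finite ι] {w : ι → ℝ}

theorem Real.monotone_biSup_finset (hw : ∀ j, 0 ≤ w j) :
    Monotone fun X : Finset ι => ⨆ j ∈ X, w j := by
  intro X Y hXY
  refine ciSup_mono (Set.finite_range _).bddAbove fun j => ?_
  by_cases hX : j ∈ X
  · simp [hX, hXY hX]
  · simpa [hX] using Real.iSup_nonneg fun _ => hw j

theorem Real.biSup_finset_singleton {a : ι} (ha : 0 ≤ w a) :
    ⨆ j ∈ ({a} : Finset ι), w j = w a :=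
  le_antisymm (Real.iSup_le (fun j => Real.iSup_le (fun h => by rw [mem_singleton.1 h]) ha) ha)
    (le_ciSup_of_le (Set.finite_range _).bddAbove a (by simp))

end FiniteSup

section MeasureFibers

variable {Ω α : Type*} [MeasurableSpace Ω] {μ : Measure Ω} [Fintype α]

theorem nullMeasurableSet_preimage_singleton_of_sum_le [IsFiniteMeasure μ] (f : Ω → α)
    (hf : ∑ a, μ (f ⁻¹' {a}) ≤ μ Set.univ) (a : α) : NullMeasurableSet (f ⁻¹' {a}) μ := by
  classical
  -- `Cᶜ` is a measurable subset of `f ⁻¹' {a}` whose measure is at least that of `f ⁻¹' {a}`.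
  set C := ⋃ b ∈ univ.erase a, toMeasurable μ (f ⁻¹' {b})
  have hC : MeasurableSet C :=
    .biUnion (univ.erase a).countable_toSet fun b _ => measurableSet_toMeasurable _ _
  have hCa : Cᶜ ⊆ f ⁻¹' {a} := fun ω hω => by
    by_contra hne
    exact hω (Set.mem_biUnion (mem_erase.2 ⟨hne, mem_univ _⟩)
      (subset_toMeasurable μ _ rfl))
  have hμC : μ C ≤ ∑ b ∈ univ.erase a, μ (f ⁻¹' {b}) := by
    refine (measure_biUnion_finset_le _ _).trans_eq ?_
    simp only [measure_toMeasurable]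
  have hle : μ (f ⁻¹' {a}) ≤ μ Cᶜ := by
    refine (ENNReal.add_le_add_iff_right (measure_ne_top μ C)).1 ?_
    calc μ (f ⁻¹' {a}) + μ C ≤ ∑ b, μ (f ⁻¹' {b}) := by
          rw [← add_sum_erase _ _ (mem_univ a)]; gcongr
      _ ≤ μ Set.univ := hf
      _ = μ Cᶜ + μ C := by rw [add_comm, measure_add_measure_compl hC]
  exact hC.compl.nullMeasurableSet.congr
    (ae_eq_of_subset_of_measure_ge hCa hle hC.compl.nullMeasurableSet (measure_ne_top _ _))

theorem integral_comp_eq_sum_of_nullMeasurableSet [IsFiniteMeasure μ] {E : Type*}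
    [NormedAddCommGroup E] [NormedSpace ℝ E] [CompleteSpace E] (f : Ω → α)
    (hf : ∀ a, NullMeasurableSet (f ⁻¹' {a}) μ) (g : α → E) :
    ∫ ω, g (f ω) ∂μ = ∑ a, μ.real (f ⁻¹' {a}) • g a := by
  classical
  have hsum : (fun ω => g (f ω)) = fun ω => ∑ a, (f ⁻¹' {a}).indicator (fun _ => g a) ω := by
    ext ω
    rw [sum_eq_single (f ω)] <;> simp +contextual [Set.indicator, eq_comm]
  rw [hsum, integral_finsetSum]
  · simp [integral_indicator₀ (hf _)]
  · exact fun a _ => (integrable_const (g a)).indicator₀ (hf a)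

end MeasureFibers

theorem stmt_14 {Ω : Type*} [MeasurableSpace Ω] (μ : Measure Ω) [IsProbabilityMeasure μ]
    (M : ℕ) (w r : Fin M → ℝ)
    (hw : ∀ j, 0 ≤ w j) (hr : ∀ j, 0 ≤ r j ∧ r j ≤ 1) (hrsum : ∑ j, r j ≤ 1)
    (P : Ω → Finset (Fin M))
    (hdist : ∀ X : Finset (Fin M), μ {ω | P ω = X} =
      ENNReal.ofReal ((∏ j ∈ X, r j) * ∏ j ∈ Xᶜ, (1 - r j))) :
    ∫ ω, (⨆ j ∈ P ω, w j) ∂μ ≥ (1 - 1 / Real.exp 1) * ∑ j, w j * r j := by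
  classical
  have hfiber : ∀ X, μ (P ⁻¹' {X}) = ENNReal.ofReal (subsetProb r univ X) := fun X => by
    rw [subsetProb, ← compl_eq_univ_sdiff]; exact hdist X
  have hmeas : ∀ X, NullMeasurableSet (P ⁻¹' {X}) μ := by
    refine nullMeasurableSet_preimage_singleton_of_sum_le P (le_of_eq ?_)
    simp_rw [hfiber, ← ENNReal.ofReal_sum_of_nonneg fun X _ => subsetProb_nonneg hr univ X,
      ← powerset_univ, sum_subsetProb, ENNReal.ofReal_one, measure_univ]
  rw [integral_comp_eq_sum_of_nullMeasurableSet P hmeas (fun X => ⨆ j ∈ X, w j)]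
  have hbound := mul_sum_le_subsetExpect hr (Real.monotone_biSup_finset hw) (by simp) univ hrsum
  simp only [Real.biSup_finset_singleton (hw _)] at hbound
  simp only [measureReal_def, hfiber, ENNReal.toReal_ofReal (subsetProb_nonneg hr _ _), smul_eq_mul]
  rw [subsetExpect, powerset_univ] at hbound
  rwa [one_div, ← Real.exp_neg, ge_iff_le]
end

section
/- Let v0 > 0, 0 < p ≤ 1, and suppose S ⊆ {1,...,M} and for each j, q'_j = 1[j ∈ S] · p · v_j/(v0 + ∑_{j'∈S} v_{j'}) and q_j = 1[j ∈ P] · p · v_j/(v0 + v_j), where S ⊆ P ⊆ {1,...,M} and v_j ≥ 0. Then for every j: q'_j / (1 - ∑_{j'=j+1}^M q'_{j'}) ≤ q_j. -/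
theorem stmt_17 (M : ℕ) (v0 : ℝ) (hv0 : 0 < v0) (p : ℝ) (hp0 : 0 < p) (hp1 : p ≤ 1)
    (v : Fin M → ℝ) (hv : ∀ j, 0 ≤ v j)
    (S P : Finset (Fin M)) (hSP : S ⊆ P)
    (q q' : Fin M → ℝ)
    (hq' : ∀ j, q' j = if j ∈ S then p * v j / (v0 + ∑ k ∈ S, v k) else 0)
    (hq : ∀ j, q j = if j ∈ P then p * v j / (v0 + v j) else 0) :
    ∀ j : Fin M, q' j / (1 - ∑ j' ∈ Finset.Ioi j, q' j') ≤ q j := by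
  intro j
  set T : ℝ := ∑ k ∈ S, v k with hT
  have hT0 : 0 ≤ T := Finset.sum_nonneg fun k _ => hv k
  have hD : 0 < v0 + T := by linarith
  have hsum : ∑ j' ∈ Finset.Ioi j, q' j'
      = (∑ k ∈ Finset.Ioi j ∩ S, v k) * p / (v0 + T) := by
    rw [Finset.sum_congr rfl fun j' _ => hq' j', ← Finset.sum_filter,
      show Finset.filter (· ∈ S) (Finset.Ioi j) = Finset.Ioi j ∩ S from by ext k; simp,
      Finset.sum_mul, Finset.sum_div]
    exact Finset.sum_congr rfl fun k _ => by ring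
  set A : ℝ := ∑ k ∈ Finset.Ioi j ∩ S, v k with hA
  have hA0 : 0 ≤ A := Finset.sum_nonneg fun k _ => hv k
  by_cases hjS : j ∈ S
  · have hjP : j ∈ P := hSP hjS
    have hAT : A + v j ≤ T := by
      have hjni : j ∉ Finset.Ioi j ∩ S := by simp
      have hins : insert j (Finset.Ioi j ∩ S) ⊆ S := by
        intro k hk
        rcases Finset.mem_insert.mp hk with h | h
        · exact h ▸ hjS
        · exact (Finset.mem_inter.mp h).2
      have := Finset.sum_le_sum_of_subset_of_nonneg hins (fun k _ _ => hv k)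
      rwa [Finset.sum_insert hjni, add_comm] at this
    have hpA : p * A ≤ A := by nlinarith
    have hden2 : 0 < v0 + v j := by have := hv j; linarith
    have hdenle : v0 + v j ≤ v0 + T - p * A := by linarith
    have hdenpos : 0 < v0 + T - p * A := lt_of_lt_of_le hden2 hdenle
    rw [hq' j, hq j, if_pos hjS, if_pos hjP, hsum]
    have h1 : 1 - A * p / (v0 + T) = (v0 + T - p * A) / (v0 + T) := by
      field_simp
    have h2 : p * v j / (v0 + T) / ((v0 + T - p * A) / (v0 + T))
        = p * v j / (v0 + T - p * A) := by
      field_simp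
    rw [h1, h2]
    have hnum : 0 ≤ p * v j := mul_nonneg hp0.le (hv j)
    gcongr
  · rw [hq' j, if_neg hjS, zero_div, hq j]
    split
    · have := hv j
      have hden2 : 0 < v0 + v j := by linarith
      positivity
    · exact le_refl 0
end
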